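/- arXiv:1508.07553 — 4 statements merged into one kernel-verified Lean document; each statement's English description precedes it below -/
import Mathlib

section
/- Let G be a countable group, A a finite set, Δ ⊂ G a finite subset, and Σ ⊂ A^G a Δ-irreducible subshift. Let Φ(u, F) denote the set of configurations in Σ that agree with a fixed u ∈ Σ outside FΔ. Then for every finite subset F ⊂ G, card(Φ(u, F)) ≥ card(π_F(Σ)), where π_F : A^G → A^F is the restriction map. -/
open Pointwise

/-
Glue an arbitrary `v ∈ Σ` on `F` to the fixed `u` on the complement of `FΔ`; these two sets are
`Δ`-apart, so irreducibility yields some `w ∈ Φ(u, F)` with the same restriction to `F` as `v`.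
Hence `π_F(Σ) ⊆ π_F(Φ(u, F))`, and `Φ(u, F)` is finite because its elements are determined by
their values on the finite set `FΔ`.
-/

theorem Set.finite_setOf_eq_off {α β : Type*} [Finite β] (u : α → β) {K : Set α}
    (hK : K.Finite) : {v : α → β | ∀ a ∉ K, v a = u a}.Finite := by
  have := hK.to_subtype
  refine Finite.of_injective (fun v : {v : α → β | ∀ a ∉ K, v a = u a} => fun a : K => v.1 a) ?_
  intro v w h
  ext a
  by_cases ha : a ∈ K
  · exact congrFun h ⟨a, ha⟩
  · rw [v.2 a ha, w.2 a ha]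

theorem Nat.card_image_le_of_image_subset {α β : Type*} (f : α → β) {s t : Set α}
    (ht : t.Finite) (h : f '' s ⊆ f '' t) : Nat.card (f '' s) ≤ Nat.card t := by
  simp only [Nat.card_coe_set_eq]
  calc (f '' s).ncard ≤ (f '' t).ncard := Set.ncard_le_ncard h (ht.image f)
    _ ≤ t.ncard := Set.ncard_image_le ht

theorem exists_eqOn_and_eq_off_mul {G A : Type*} [Mul G] {S : Set (G → A)} {Δ : Set G}
    (hirr : ∀ Ω₁ Ω₂ : Set G, Disjoint (Ω₁ * Δ) Ω₂ →
      ∀ u₁ ∈ S, ∀ u₂ ∈ S, ∃ w ∈ S, (∀ g ∈ Ω₁, w g = u₁ g) ∧ (∀ g ∈ Ω₂, w g = u₂ g))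
    (Ω : Set G) {v u : G → A} (hv : v ∈ S) (hu : u ∈ S) :
    ∃ w ∈ S, Set.EqOn w v Ω ∧ ∀ g ∉ Ω * Δ, w g = u g :=
  hirr Ω (Ω * Δ)ᶜ disjoint_compl_right v hv u hu

theorem card_phi_ge_card_restriction_general {G A : Type*} [Group G] [Finite A] [DecidableEq G]
    (S : Set (G → A))
    (Δ : Finset G)
    (hirr : ∀ Ω₁ Ω₂ : Set G, Disjoint (Ω₁ * (Δ : Set G)) Ω₂ →
      ∀ u₁ ∈ S, ∀ u₂ ∈ S, ∃ w ∈ S, (∀ g ∈ Ω₁, w g = u₁ g) ∧ (∀ g ∈ Ω₂, w g = u₂ g))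
    (u : G → A) (hu : u ∈ S) (F : Finset G) :
    Nat.card ((fun v : G → A => fun g : F => v (g : G)) '' S) ≤
      Nat.card {v ∈ S | ∀ g : G, g ∉ F * Δ → v g = u g} := by
  have hΦ : {v ∈ S | ∀ g : G, g ∉ F * Δ → v g = u g}.Finite :=
    (Set.finite_setOf_eq_off u (F * Δ).finite_toSet).subset fun v hv => hv.2
  refine Nat.card_image_le_of_image_subset _ hΦ ?_
  rintro _ ⟨v, hv, rfl⟩
  obtain ⟨w, hw, hwF, hwu⟩ := exists_eqOn_and_eq_off_mul hirr F hv hu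
  refine ⟨w, ⟨hw, fun g hg => hwu g ?_⟩, funext fun g => hwF g.2⟩
  rwa [← Finset.coe_mul, Finset.mem_coe]

/-- Let `Σ ⊆ A^G` be a `Δ`-irreducible subshift (with the infinite-set gluing property:
for any subsets `Ω₁, Ω₂ ⊆ G` with `Ω₁Δ ∩ Ω₂ = ∅` and any `u₁, u₂ ∈ Σ` there is `w ∈ Σ`
agreeing with `u₁` on `Ω₁` and with `u₂` on `Ω₂`).  For `u ∈ Σ` and a finite `F ⊆ G`,
let `Φ(u, F)` be the set of configurations of `Σ` agreeing with `u` outside `FΔ`.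
Then `card (Φ(u, F)) ≥ card (π_F(Σ))`, where `π_F` is the restriction map to `F`. -/
theorem card_phi_ge_card_restriction {G A : Type*} [Group G] [Countable G] [Finite A]
    [TopologicalSpace A] [DiscreteTopology A] [DecidableEq G]
    (S : Set (G → A)) (hclosed : IsClosed S)
    (hinv : ∀ (g : G), ∀ u ∈ S, (fun h => u (g⁻¹ * h)) ∈ S)
    (Δ : Finset G)
    (hirr : ∀ Ω₁ Ω₂ : Set G, Disjoint (Ω₁ * (Δ : Set G)) Ω₂ →
      ∀ u₁ ∈ S, ∀ u₂ ∈ S, ∃ w ∈ S, (∀ g ∈ Ω₁, w g = u₁ g) ∧ (∀ g ∈ Ω₂, w g = u₂ g))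
    (u : G → A) (hu : u ∈ S) (F : Finset G) :
    Nat.card ((fun v : G → A => fun g : F => v (g : G)) '' S) ≤
      Nat.card {v ∈ S | ∀ g : G, g ∉ F * Δ → v g = u g} :=
  card_phi_ge_card_restriction_general S Δ hirr u hu F
end

section
/- Let G be a countable group, A a finite set, and Σ ⊂ A^G an infinite strongly irreducible subshift (with the infinite-set gluing property). Then every G-homoclinicity class in Σ is infinite; equivalently, for every u ∈ Σ, the set of configurations in Σ almost equal to u is infinite. -/
/-!
Given finitely many distinct configurations `v₁, …, vₙ ∈ Σ`, pick a finite set `F ⊆ G` on which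
they are pairwise distinct. Gluing `u` on `(FΔ⁻¹)ᶜ` with `vᵢ` on `F` gives configurations of `Σ`
that differ from `u` only on the finite set `FΔ⁻¹` and are still pairwise distinct on `F`.
So the class of `u` has at least `n` elements for every `n`, since `Σ` is infinite.
-/

open Pointwise

theorem Set.Finite.exists_finite_separating {α β : Type*} {T : Set (α → β)} (hT : T.Finite) :
    ∃ F : Set α, F.Finite ∧ ∀ a ∈ T, ∀ b ∈ T, EqOn a b F → a = b := by
  have hpair : ∀ a b : α → β, ∃ F : Set α, F.Finite ∧ (EqOn a b F → a = b) := by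
    intro a b
    by_cases hab : a = b
    · exact ⟨∅, finite_empty, fun _ => hab⟩
    · obtain ⟨x, hx⟩ := Function.ne_iff.mp hab
      exact ⟨{x}, finite_singleton x, fun h => absurd (h rfl) hx⟩
  choose Fp hFp hsep using hpair
  refine ⟨⋃ a ∈ T, ⋃ b ∈ T, Fp a b, hT.biUnion fun a _ => hT.biUnion fun b _ => hFp a b,
    fun a ha b hb hab => hsep a b (hab.mono ?_)⟩
  exact (subset_biUnion_of_mem (u := fun b => Fp a b) hb).trans
    (subset_biUnion_of_mem (u := fun a => ⋃ b ∈ T, Fp a b) ha)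

theorem Set.infinite_of_forall_finite_injOn_mapsTo {α β : Type*} {s : Set α} {t : Set β}
    (hs : s.Infinite) (h : ∀ T ⊆ s, T.Finite → ∃ f : α → β, InjOn f T ∧ MapsTo f T t) :
    t.Infinite := by
  intro ht
  obtain ⟨T, hTs, hTfin, hTcard⟩ := hs.exists_subset_ncard_eq (t.ncard + 1)
  obtain ⟨f, hinj, hmaps⟩ := h T hTs hTfin
  have := ncard_le_ncard_of_injOn f hmaps hinj ht
  omega

theorem Set.disjoint_compl_mul_inv_mul {G : Type*} [Group G] (F Δ : Set G) :
    Disjoint ((F * Δ⁻¹)ᶜ * Δ) F := by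
  rw [disjoint_left]
  rintro _ ⟨y, hy, d, hd, rfl⟩ hyd
  exact hy ⟨y * d, hyd, d⁻¹, inv_mem_inv.mpr hd, by group⟩

section Subshift

variable {G A : Type*} [Group G]

def homoclinicClass (S : Set (G → A)) (u : G → A) : Set (G → A) :=
  {v ∈ S | {g : G | v g ≠ u g}.Finite}

def IsStronglyIrreducibleWith (S : Set (G → A)) (Δ : Set G) : Prop :=
  ∀ Ω₁ Ω₂ : Set G, Disjoint (Ω₁ * Δ) Ω₂ →
    ∀ u₁ ∈ S, ∀ u₂ ∈ S, ∃ w ∈ S, (∀ g ∈ Ω₁, w g = u₁ g) ∧ (∀ g ∈ Ω₂, w g = u₂ g)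

variable {S : Set (G → A)} {Δ : Set G} {u : G → A}

theorem IsStronglyIrreducibleWith.exists_mem_homoclinicClass_eqOn
    (hirr : IsStronglyIrreducibleWith S Δ) (hΔ : Δ.Finite) (hu : u ∈ S)
    {F : Set G} (hF : F.Finite) {v : G → A} (hv : v ∈ S) :
    ∃ w ∈ homoclinicClass S u, Set.EqOn w v F := by
  obtain ⟨w, hwS, hwu, hwv⟩ := hirr _ F (Set.disjoint_compl_mul_inv_mul F Δ) u hu v hv
  refine ⟨w, ⟨hwS, (hF.mul hΔ.inv).subset fun g hg => ?_⟩, hwv⟩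
  by_contra hgF
  exact hg (hwu g hgF)

theorem IsStronglyIrreducibleWith.homoclinicClass_infinite
    (hirr : IsStronglyIrreducibleWith S Δ) (hΔ : Δ.Finite) (hS : S.Infinite) (hu : u ∈ S) :
    (homoclinicClass S u).Infinite := by
  refine Set.infinite_of_forall_finite_injOn_mapsTo hS fun T hTS hT => ?_
  obtain ⟨F, hF, hsep⟩ := hT.exists_finite_separating
  have : Nonempty (G → A) := ⟨u⟩
  choose! glue hglue hglue_eq using
    fun v (hv : v ∈ S) => hirr.exists_mem_homoclinicClass_eqOn hΔ hu hF hv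
  refine ⟨glue, fun a ha b hb hab => hsep a ha b hb fun g hg => ?_,
    fun v hv => hglue v (hTS hv)⟩
  rw [← hglue_eq a (hTS ha) hg, ← hglue_eq b (hTS hb) hg, hab]

end Subshift

theorem homoclinicity_class_infinite_general {G A : Type*} [Group G]
    (S : Set (G → A))
    (hinf : S.Infinite)
    (Δ : Finset G)
    (hirr : ∀ Ω₁ Ω₂ : Set G, Disjoint (Ω₁ * (Δ : Set G)) Ω₂ →
      ∀ u₁ ∈ S, ∀ u₂ ∈ S, ∃ w ∈ S, (∀ g ∈ Ω₁, w g = u₁ g) ∧ (∀ g ∈ Ω₂, w g = u₂ g))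
    (u : G → A) (hu : u ∈ S) :
    {v ∈ S | {g : G | v g ≠ u g}.Finite}.Infinite :=
  IsStronglyIrreducibleWith.homoclinicClass_infinite (S := S) hirr Δ.finite_toSet hinf hu

/-- Let `G` be a countable group, `A` a finite set, and `Σ ⊆ A^G` an infinite strongly
irreducible subshift (with the infinite-set gluing property: there is a finite `Δ ⊆ G`
such that for any `Ω₁, Ω₂ ⊆ G` with `Ω₁Δ ∩ Ω₂ = ∅` and any `u₁, u₂ ∈ Σ` there is `w ∈ Σ`
agreeing with `u₁` on `Ω₁` and with `u₂` on `Ω₂`).  Then every `G`-homoclinicity class of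
`Σ` is infinite: for every `u ∈ Σ`, the set of configurations of `Σ` almost equal to `u`
(i.e. coinciding with `u` outside a finite set) is infinite. -/
theorem homoclinicity_class_infinite {G A : Type*} [Group G] [Countable G] [Finite A]
    [TopologicalSpace A] [DiscreteTopology A]
    (S : Set (G → A)) (hclosed : IsClosed S)
    (hinv : ∀ (g : G), ∀ u ∈ S, (fun h => u (g⁻¹ * h)) ∈ S)
    (hinf : S.Infinite)
    (Δ : Finset G)
    (hirr : ∀ Ω₁ Ω₂ : Set G, Disjoint (Ω₁ * (Δ : Set G)) Ω₂ →
      ∀ u₁ ∈ S, ∀ u₂ ∈ S, ∃ w ∈ S, (∀ g ∈ Ω₁, w g = u₁ g) ∧ (∀ g ∈ Ω₂, w g = u₂ g))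
    (u : G → A) (hu : u ∈ S) :
    {v ∈ S | {g : G | v g ≠ u g}.Finite}.Infinite :=
  homoclinicity_class_infinite_general S hinf Δ hirr u hu
end

section
/- Let X be a compact metrizable space with an expansive continuous action of a countable group G such that the set of periodic points Per(X,G) is dense in X. Then every injective continuous G-equivariant map τ : X → X is surjective. -/
/-!
Let `x` be a periodic point and `H` its stabilizer, a subgroup of finite index. By equivariance
`τ` maps the fixed-point set `Fix(H)` into itself. Expansiveness makes `Fix(H)` finite: since `H`
fixes these points, `g • y` only depends on the coset `gH`, so `y ↦ (r • y)_r`, with `r` running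
over a finite set of coset representatives, embeds `Fix(H)` as a `δ`-separated subset of the
compact space `X ^ (G ⧸ H)`. An injective self-map of a finite set is onto, so `x ∈ range τ`.
Hence `range τ` is dense, and it is compact, hence closed, so it is all of `X`.
-/

open Set Metric MulAction

theorem Set.finite_of_le_dist {X : Type*} [MetricSpace X] [CompactSpace X] {s : Set X}
    {δ : ℝ} (hδ : 0 < δ) (hs : ∀ y ∈ s, ∀ z ∈ s, y ≠ z → δ ≤ dist y z) : s.Finite := by
  obtain ⟨t, -, ht, hcover⟩ := finite_cover_balls_of_compact (isCompact_univ (X := X)) (half_pos hδ)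
  have hsub : s ⊆ ⋃ c ∈ t, s ∩ ball c (δ / 2) := fun y hy => by
    obtain ⟨c, hc, hyc⟩ := mem_iUnion₂.mp (hcover (mem_univ y))
    exact mem_biUnion hc ⟨hy, hyc⟩
  refine (ht.biUnion fun c _ => Subsingleton.finite ?_).subset hsub
  rintro y ⟨hy, hyc⟩ z ⟨hz, hzc⟩
  by_contra hne
  have := dist_triangle_right y z c
  linarith [hs y hy z hz hne, mem_ball.mp hyc, mem_ball.mp hzc]

section Expansive

variable {G X : Type*} [Group G] [MulAction G X]

theorem MulAction.smul_eq_out_mk_smul_of_mem_fixedPoints {H : Subgroup G} {y : X}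
    (hy : y ∈ fixedPoints H X) (g : G) : g • y = (g : G ⧸ H).out • y := by
  obtain ⟨h, hout⟩ := QuotientGroup.mk_out_eq_mul H g
  rw [hout, mul_smul, ← Subgroup.smul_def, hy h]

theorem MulAction.finite_fixedPoints_of_expansive [MetricSpace X] [CompactSpace X] {δ : ℝ}
    (hδ : 0 < δ) (hexp : ∀ x y : X, x ≠ y → ∃ g : G, δ ≤ dist (g • x) (g • y))
    (H : Subgroup G) [H.FiniteIndex] : (fixedPoints H X).Finite := by
  have := Fintype.ofFinite (G ⧸ H)
  let F : X → (G ⧸ H → X) := fun y q => q.out • y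
  have hsep : ∀ y ∈ fixedPoints H X, ∀ z ∈ fixedPoints H X, y ≠ z → δ ≤ dist (F y) (F z) := by
    intro y hy z hz hne
    obtain ⟨g, hg⟩ := hexp y z hne
    rw [smul_eq_out_mk_smul_of_mem_fixedPoints hy, smul_eq_out_mk_smul_of_mem_fixedPoints hz] at hg
    exact hg.trans (dist_le_pi_dist (F y) (F z) g)
  have hinj : InjOn F (fixedPoints H X) := fun y hy z hz hyz => by
    by_contra hne
    have := hsep y hy z hz hne
    rw [hyz, dist_self] at this
    linarith
  refine Finite.of_finite_image (finite_of_le_dist hδ ?_) hinj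
  rintro _ ⟨y, hy, rfl⟩ _ ⟨z, hz, rfl⟩ hne
  exact hsep y hy z hz (ne_of_apply_ne F hne)

theorem MulAction.mem_range_of_finite_orbit_of_expansive [MetricSpace X] [CompactSpace X]
    {δ : ℝ} (hδ : 0 < δ) (hexp : ∀ x y : X, x ≠ y → ∃ g : G, δ ≤ dist (g • x) (g • y))
    {τ : X → X} (hτinj : τ.Injective) (hτeq : ∀ (g : G) (x : X), τ (g • x) = g • τ x)
    {x : X} (hx : (orbit G x).Finite) : x ∈ range τ := by
  let H := stabilizer G x
  have : H.FiniteIndex := ⟨by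
    rw [index_stabilizer]
    exact (Set.ncard_pos hx).mpr ⟨x, mem_orbit_self x⟩ |>.ne'⟩
  have hmaps : MapsTo τ (fixedPoints H X) (fixedPoints H X) := fun y hy h => by
    rw [Subgroup.smul_def, ← hτeq, ← Subgroup.smul_def, hy h]
  have hbij := ((finite_fixedPoints_of_expansive hδ hexp H).injOn_iff_bijOn_of_mapsTo hmaps).mp
    hτinj.injOn
  have hx_fixed : x ∈ fixedPoints H X := fun h => h.prop
  obtain ⟨y, -, hyx⟩ := hbij.surjOn hx_fixed
  exact ⟨y, hyx⟩

end Expansive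

theorem surjunctive_of_expansive_dense_periodic_general {G X : Type*} [Group G]
    [MetricSpace X] [CompactSpace X] [MulAction G X]
    (hexp : ∃ δ > (0 : ℝ), ∀ x y : X, x ≠ y → ∃ g : G, δ ≤ dist (g • x) (g • y))
    (hdense : Dense {x : X | (MulAction.orbit G x).Finite})
    (τ : X → X) (hτc : Continuous τ) (hτinj : Function.Injective τ)
    (hτeq : ∀ (g : G) (x : X), τ (g • x) = g • τ x) :
    Function.Surjective τ := by
  obtain ⟨δ, hδ, hexp⟩ := hexp
  have hdense_range : Dense (range τ) :=
    hdense.mono fun x hx => mem_range_of_finite_orbit_of_expansive hδ hexp hτinj hτeq hx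
  rw [← range_eq_univ, ← (isCompact_range hτc).isClosed.closure_eq]
  exact hdense_range.closure_eq

/-- Let `X` be a compact metrizable space with an expansive continuous action of a
countable group `G` such that the set of periodic points (points with finite orbit)
is dense in `X`.  Then every injective continuous `G`-equivariant map `τ : X → X`
is surjective. -/
theorem surjunctive_of_expansive_dense_periodic {G X : Type*} [Group G] [Countable G]
    [MetricSpace X] [CompactSpace X] [MulAction G X]
    (hcont : ∀ g : G, Continuous fun x : X => g • x)
    (hexp : ∃ δ > (0 : ℝ), ∀ x y : X, x ≠ y → ∃ g : G, δ ≤ dist (g • x) (g • y))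
    (hdense : Dense {x : X | (MulAction.orbit G x).Finite})
    (τ : X → X) (hτc : Continuous τ) (hτinj : Function.Injective τ)
    (hτeq : ∀ (g : G) (x : X), τ (g • x) = g • τ x) :
    Function.Surjective τ :=
  surjunctive_of_expansive_dense_periodic_general hexp hdense τ hτc hτinj hτeq
end

section
/- Let G be a countable group containing a finite-index subgroup H, let A be a finite set, Ω ⊂ G a finite symmetric window with 1 ∈ Ω, and Σ ⊂ A^G the SFT determined by Ω and P ⊂ A^Ω. Let E ⊂ G be finite, suppose the translates hEΩ², h ∈ H, are pairwise disjoint, and suppose v ∈ Σ is fixed by H. If u₀, u₁ ∈ Σ agree with each other on G \ E, and v agrees with u₀ on EΩ², then for every z : H → {0,1} the configuration w_z defined by w_z(g) = u_{z(h)}(h⁻¹g) if g ∈ hEΩ² for the unique such h ∈ H, and w_z(g) = v(g) otherwise, belongs to Σ. -/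
/-!
The pattern of `w` read on the window `g⁻¹Ω` comes from a single copy of the construction.
If `g⁻¹ ∈ h • EΩ` for some `h ∈ H`, then `g⁻¹Ω ⊆ h • EΩ²`, where `w` is the translate of
`u_{z h}` by `h`, so it is a pattern of `u_{z h}`. Otherwise, by symmetry of `Ω`, no point of
`g⁻¹Ω` lies in any `h • E`; on `h • EΩ² \ h • E` the translate of `u_{z h}` agrees with that
of `u₀`, hence with `v` by `H`-invariance, so `w` agrees with `v` on all of `g⁻¹Ω`.
-/

open Pointwise

section Patterns

variable {G A : Type*} [Group G]

/-- The paper's `(g • x)|_Ω`, for the shift action `(g • x) h = x (g⁻¹ * h)`. -/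
def patternAt (Ω : Finset G) (x : G → A) (g : G) : Ω → A := fun ω => x (g⁻¹ * ω)

lemma patternAt_congr {Ω : Finset G} {x y : G → A} {g : G}
    (hxy : ∀ ω ∈ Ω, x (g⁻¹ * ω) = y (g⁻¹ * ω)) : patternAt Ω x g = patternAt Ω y g :=
  funext fun ω => hxy ω ω.2

lemma patternAt_eq_of_eq_translate_on {Ω S : Finset G} [DecidableEq G] {w y : G → A}
    {g h : G} (hw : ∀ x ∈ S * Ω, w (h * x) = y x) (hgh : h⁻¹ * g⁻¹ ∈ S) :
    patternAt Ω w g = patternAt Ω y (g * h) := by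
  funext ω
  have hmem : h⁻¹ * g⁻¹ * ω ∈ S * Ω := Finset.mul_mem_mul hgh ω.2
  calc w (g⁻¹ * ω) = w (h * (h⁻¹ * g⁻¹ * ω)) := by group
    _ = y (h⁻¹ * g⁻¹ * ω) := hw _ hmem
    _ = y ((g * h)⁻¹ * ω) := by group

lemma apply_eq_of_notMem_translates {E Ω : Finset G} [DecidableEq G] {H : Subgroup G}
    {v w : G → A} (hvfix : ∀ h : H, ∀ g : G, v ((h : G)⁻¹ * g) = v g)
    (u : Fin 2 → G → A) (huagree : ∀ g : G, g ∉ E → u 0 g = u 1 g)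
    (hvu : ∀ g ∈ E * Ω * Ω, v g = u 0 g) (z : H → Fin 2)
    (hw1 : ∀ h : H, ∀ g ∈ E * Ω * Ω, w ((h : G) * g) = u (z h) g)
    (hw2 : ∀ g : G, (∀ h : H, (h : G)⁻¹ * g ∉ E * Ω * Ω) → w g = v g)
    {p : G} (hp : ∀ h : H, (h : G)⁻¹ * p ∈ E * Ω * Ω → (h : G)⁻¹ * p ∉ E) :
    w p = v p := by
  by_cases hcover : ∃ h : H, (h : G)⁻¹ * p ∈ E * Ω * Ω
  · obtain ⟨h, hh⟩ := hcover
    have hu_eq : u (z h) ((h : G)⁻¹ * p) = u 0 ((h : G)⁻¹ * p) := by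
      rcases Fin.exists_fin_two.mp ⟨z h, rfl⟩ with hz | hz <;> rw [hz]
      exact (huagree _ (hp h hh)).symm
    calc w p = w ((h : G) * ((h : G)⁻¹ * p)) := by group
      _ = u 0 ((h : G)⁻¹ * p) := by rw [hw1 h _ hh, hu_eq]
      _ = v p := by rw [← hvu _ hh, hvfix]
  · exact hw2 p (not_exists.mp hcover)

end Patterns

theorem sft_mixing_construction_general {G A : Type*} [Group G]
    [DecidableEq G]
    (H : Subgroup G)
    (Ω : Finset G) (hΩsymm : ∀ ω ∈ Ω, ω⁻¹ ∈ Ω)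
    (P : Set (Ω → A))
    (E : Finset G)
    (v : G → A) (hv : ∀ g : G, (fun ω : Ω => v (g⁻¹ * (ω : G))) ∈ P)
    (hvfix : ∀ h : H, ∀ g : G, v ((h : G)⁻¹ * g) = v g)
    (u : Fin 2 → G → A) (hu : ∀ i, ∀ g : G, (fun ω : Ω => u i (g⁻¹ * (ω : G))) ∈ P)
    (huagree : ∀ g : G, g ∉ E → u 0 g = u 1 g)
    (hvu : ∀ g ∈ (E * Ω * Ω : Finset G), v g = u 0 g)
    (z : H → Fin 2) (w : G → A)
    (hw1 : ∀ h : H, ∀ g ∈ (E * Ω * Ω : Finset G), w ((h : G) * g) = u (z h) g)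
    (hw2 : ∀ g : G, (∀ h : H, (h : G)⁻¹ * g ∉ (E * Ω * Ω : Finset G)) → w g = v g) :
    ∀ g : G, (fun ω : Ω => w (g⁻¹ * (ω : G))) ∈ P := by
  intro g
  change patternAt Ω w g ∈ P
  by_cases hnear : ∃ h : H, (h : G)⁻¹ * g⁻¹ ∈ E * Ω
  · obtain ⟨h, hh⟩ := hnear
    rw [patternAt_eq_of_eq_translate_on (hw1 h) hh]
    exact hu (z h) (g * h)
  · have hw_eq_v : ∀ ω ∈ Ω, w (g⁻¹ * ω) = v (g⁻¹ * ω) := fun ω hω =>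
      apply_eq_of_notMem_translates hvfix u huagree hvu z hw1 hw2 fun h _ hE =>
        hnear ⟨h, by simpa [mul_assoc] using Finset.mul_mem_mul hE (hΩsymm ω hω)⟩
    rw [patternAt_congr hw_eq_v]
    exact hv g

/-- The key construction of Proposition 4.8:  let `Σ ⊆ A^G` be the SFT with symmetric
window `Ω ∋ 1` and patterns `P`, `H ≤ G` a finite-index subgroup, and `E ⊆ G` finite.
Assume the translates `h • EΩ²` (`h ∈ H`) are pairwise disjoint, `v ∈ Σ` is fixed by `H`,
`u₀, u₁ ∈ Σ` agree on `G \ E`, and `v` agrees with `u₀` on `EΩ²`.  Then for every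
`z : H → {0,1}`, the configuration `w_z` defined by `w_z g = u_{z h} (h⁻¹ g)` if
`g ∈ h • EΩ²` for the (unique) `h ∈ H`, and `w_z g = v g` otherwise, belongs to `Σ`. -/
theorem sft_mixing_construction {G A : Type*} [Group G] [Countable G] [Finite A]
    [DecidableEq G]
    (H : Subgroup G) (hH : H.FiniteIndex)
    (Ω : Finset G) (hΩ1 : (1 : G) ∈ Ω) (hΩsymm : ∀ ω ∈ Ω, ω⁻¹ ∈ Ω)
    (P : Set (Ω → A))
    (E : Finset G)
    (hdisj : ∀ h₁ h₂ : H, h₁ ≠ h₂ →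
      Disjoint ((h₁ : G) • ((E * Ω * Ω : Finset G) : Set G))
        ((h₂ : G) • ((E * Ω * Ω : Finset G) : Set G)))
    (v : G → A) (hv : ∀ g : G, (fun ω : Ω => v (g⁻¹ * (ω : G))) ∈ P)
    (hvfix : ∀ h : H, ∀ g : G, v ((h : G)⁻¹ * g) = v g)
    (u : Fin 2 → G → A) (hu : ∀ i, ∀ g : G, (fun ω : Ω => u i (g⁻¹ * (ω : G))) ∈ P)
    (huagree : ∀ g : G, g ∉ E → u 0 g = u 1 g)
    (hvu : ∀ g ∈ (E * Ω * Ω : Finset G), v g = u 0 g)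
    (z : H → Fin 2) (w : G → A)
    (hw1 : ∀ h : H, ∀ g ∈ (E * Ω * Ω : Finset G), w ((h : G) * g) = u (z h) g)
    (hw2 : ∀ g : G, (∀ h : H, (h : G)⁻¹ * g ∉ (E * Ω * Ω : Finset G)) → w g = v g) :
    ∀ g : G, (fun ω : Ω => w (g⁻¹ * (ω : G))) ∈ P :=
  sft_mixing_construction_general H Ω hΩsymm P E v hv hvfix u hu huagree hvu z w hw1 hw2
end
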